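/- arXiv:1212.6366 — 5 statements merged into one kernel-verified Lean document; each statement's English description precedes it below -/
import Mathlib

section
/- For any nonnegative integers n, b, s with s + b ≤ n, the binomial coefficient C(n, b) equals the sum over k from 0 to b of C(n - s - k - 1, b - k) * C(s + k, s). -/
/-- Classical binomial identity (Lemma 4 of the paper):
for nonnegative integers `n, b, s` with `s + b ≤ n`,
`C(n, b) = ∑_{k=0}^{b} C(n - s - k - 1, b - k) * C(s + k, s)`.
(With natural subtraction, the `k = b` boundary term `C(n-s-b-1, 0)` equals `1`,
matching the convention that `C(a, 0) = 1` even when `a = -1` would occur.) -/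
theorem stmt_0 (n b s : ℕ) (h : s + b ≤ n) :
    n.choose b = ∑ k ∈ Finset.range (b + 1),
      (n - s - k - 1).choose (b - k) * (s + k).choose s := by
  induction n generalizing b s with
  | zero =>
    have hb : b = 0 := by omega
    subst hb; simp
  | succ n ih =>
    match b with
    | 0 => simp
    | b + 1 =>
      by_cases hb1 : s + (b + 1) ≤ n
      · have hb : s + b ≤ n := by omega
        rw [Nat.choose_succ_succ, ih b s hb, ih (b + 1) s hb1]
        conv_rhs => rw [Finset.sum_range_succ]
        rw [Finset.sum_range_succ
          (f := fun k => (n - s - k - 1).choose (b + 1 - k) * (s + k).choose s)]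
        rw [← add_assoc]
        congr 1
        · rw [← Finset.sum_add_distrib]
          refine Finset.sum_congr rfl fun k hk => ?_
          have hk' : k ≤ b := Nat.lt_succ_iff.mp (Finset.mem_range.mp hk)
          have e1 : n + 1 - s - k - 1 = (n - s - k - 1) + 1 := by omega
          have e2 : b + 1 - k = (b - k) + 1 := by omega
          rw [e1, e2, Nat.choose_succ_succ, add_mul]
        · simp
      · have hn : n = s + b := by omega
        subst hn
        rw [Finset.sum_range_succ]
        have hlast : (s + b + 1 - s - (b + 1) - 1).choose (b + 1 - (b + 1))
            * (s + (b + 1)).choose s = (s + (b + 1)).choose s := by simp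
        rw [hlast]
        have hzero : ∀ k ∈ Finset.range (b + 1),
            (s + b + 1 - s - k - 1).choose (b + 1 - k) * (s + k).choose s = 0 := by
          intro k hk
          have hk' : k ≤ b := Nat.lt_succ_iff.mp (Finset.mem_range.mp hk)
          have e1 : s + b + 1 - s - k - 1 = b - k := by omega
          rw [e1, Nat.choose_eq_zero_of_lt (by omega), zero_mul]
        rw [Finset.sum_eq_zero hzero, zero_add,
          show s + (b + 1) = s + b + 1 by ring,
          ← Nat.choose_symm (show b + 1 ≤ s + b + 1 by omega)]
        congr 1
        omega
end

section
/- Let m = (m_1, ..., m_r) with r ≥ 2 and m' = (m_1, ..., m_{r-2}, m_{r-1} + m_r), and let h be the map on words that replaces every occurrence of the letter r by r-1. If π is a stationary distribution of the m-TASEP and π' is defined on words of type m' by π'(v) = Σ_{u : h(u) = v} π(u), then π' is a stationary distribution of the m'-TASEP. -/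
/-- TASEP move at position `i` of the cyclic word `u`. -/
def tasepStep {n r : ℕ} [NeZero n] (u : Fin n → Fin r) (i : Fin n) : Fin n → Fin r :=
  if u i < u (i - 1) then Function.update (Function.update u i (u (i - 1))) (i - 1) (u i)
  else u

/-- The TASEP transition matrix on cyclic words of length `n` over the alphabet `Fin r`. -/
def tasepMatrix {n r : ℕ} [NeZero n] (u v : Fin n → Fin r) : ℚ :=
  ((Finset.univ.filter (fun i : Fin n => tasepStep u i = v)).card : ℚ) / n

/-- `u` is a word of type `m`: letter `a` occurs exactly `m a` times. -/
def hasType {n r : ℕ} (m : Fin r → ℕ) (u : Fin n → Fin r) : Prop :=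
  ∀ a : Fin r, (Finset.univ.filter (fun i => u i = a)).card = m a

/-- The map `h` replacing every occurrence of the largest letter `r` by `r - 1`
(0-indexed: the letter `r - 1` is replaced by `r - 2`). -/
def collapseTop {n r : ℕ} [NeZero r] (u : Fin n → Fin r) : Fin n → Fin r :=
  fun i =>
    if (u i : ℕ) = r - 1 then ⟨r - 2, by have := Nat.pos_of_neZero r; omega⟩ else u i

/-! Collapsing letters along a monotone map commutes with every TASEP move: a move that swaps two
letters with the same image is invisible after collapsing. Hence the `m`-TASEP is strongly lumpable
along `h` onto the `m'`-TASEP, and pushing a stationary distribution forward along a lumping map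
gives a stationary distribution of the lumped chain. -/

open Finset

section Lumping

variable {α β R : Type*} [Fintype α] [Fintype β] [DecidableEq β] [CommSemiring R]

/-- `hPQ` says that `P` is strongly lumpable along `f`, with lumped chain `Q`. -/
theorem sum_fiber_mul_eq_of_lumpable (f : α → β) (P : α → α → R) (Q : β → β → R)
    (hPQ : ∀ w v, Q (f w) v = ∑ u ∈ univ.filter (fun u => f u = v), P w u)
    (π : α → R) (hπ : ∀ v, ∑ u, π u * P u v = π v) (v : β) :
    ∑ u, (∑ w ∈ univ.filter (fun w => f w = u), π w) * Q u v =
      ∑ w ∈ univ.filter (fun w => f w = v), π w := by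
  calc ∑ u, (∑ w ∈ univ.filter (fun w => f w = u), π w) * Q u v
      = ∑ u, ∑ w ∈ univ.filter (fun w => f w = u), π w * Q (f w) v := by
        refine sum_congr rfl fun u _ => ?_
        rw [sum_mul]
        refine sum_congr rfl fun w hw => ?_
        rw [(mem_filter.1 hw).2]
    _ = ∑ w, π w * Q (f w) v := sum_fiberwise _ _ _
    _ = ∑ u ∈ univ.filter (fun u => f u = v), ∑ w, π w * P w u := by
        simp only [hPQ, mul_sum]
        exact sum_comm
    _ = ∑ u ∈ univ.filter (fun u => f u = v), π u := sum_congr rfl fun u _ => hπ u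

end Lumping

theorem card_filter_comp_eq_sum {ι κ μ : Type*} [Fintype ι] [Fintype κ] [DecidableEq κ]
    [DecidableEq μ] (f : ι → κ) (g : κ → μ) (a : μ) :
    #(univ.filter (fun i => g (f i) = a)) =
      ∑ b ∈ univ.filter (fun b => g b = a), #(univ.filter (fun i => f i = b)) := by
  rw [card_eq_sum_card_fiberwise (f := f) (t := univ.filter (fun b => g b = a))
    fun i hi => by simpa using hi]
  refine sum_congr rfl fun b hb => ?_
  rw [filter_filter]
  congr 1
  exact filter_congr fun i _ => ⟨And.right, fun h => ⟨h ▸ (mem_filter.1 hb).2, h⟩⟩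

section Monotone

variable {n r s : ℕ} {g : Fin r → Fin s}

theorem Monotone.comp_tasepStep [NeZero n] (hg : Monotone g) (u : Fin n → Fin r) (i : Fin n) :
    g ∘ tasepStep u i = tasepStep (g ∘ u) i := by
  unfold tasepStep
  by_cases h : u i < u (i - 1)
  · rw [if_pos h, Function.comp_update, Function.comp_update]
    by_cases h' : (g ∘ u) i < (g ∘ u) (i - 1)
    · rw [if_pos h']
      rfl
    · -- the swapped letters become equal, so the swap is invisible after applying `g`
      have heq : g (u i) = g (u (i - 1)) := le_antisymm (hg h.le) (not_lt.mp h')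
      rw [if_neg h']
      funext j
      simp only [Function.update_apply, Function.comp_apply]
      split_ifs with hj hj'
      · rw [hj, heq]
      · rw [hj', heq]
      · rfl
  · have h' : ¬ (g ∘ u) i < (g ∘ u) (i - 1) := not_lt.mpr (hg (not_lt.mp h))
    rw [if_neg h, if_neg h']

theorem Monotone.tasepMatrix_comp [NeZero n] (hg : Monotone g) (w : Fin n → Fin r)
    (v : Fin n → Fin s) :
    tasepMatrix (g ∘ w) v = ∑ u ∈ univ.filter (fun u => g ∘ u = v), tasepMatrix w u := by
  unfold tasepMatrix
  rw [← sum_div, ← Nat.cast_sum]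
  congr 2
  simp only [← hg.comp_tasepStep]
  exact card_filter_comp_eq_sum (tasepStep w) (g ∘ ·) v

end Monotone

theorem hasType_comp {n r s : ℕ} {m : Fin r → ℕ} {u : Fin n → Fin r} (hu : hasType m u)
    (g : Fin r → Fin s) :
    hasType (fun a => ∑ b ∈ univ.filter (fun b => g b = a), m b) (g ∘ u) :=
  fun a => (card_filter_comp_eq_sum u g a).trans (sum_congr rfl fun b _ => hu b)

def collapseLetter (r : ℕ) [NeZero r] (x : Fin r) : Fin r :=
  if (x : ℕ) = r - 1 then ⟨r - 2, by have := Nat.pos_of_neZero r; omega⟩ else x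

section Collapse

variable {r : ℕ} [NeZero r]

theorem collapseTop_eq_comp {n : ℕ} (u : Fin n → Fin r) :
    collapseTop u = collapseLetter r ∘ u :=
  rfl

theorem collapseLetter_monotone : Monotone (collapseLetter r) := by
  intro x y h
  have := y.isLt
  rw [Fin.le_def] at h
  unfold collapseLetter
  split_ifs <;> simp only [Fin.le_def] <;> omega

theorem sum_filter_collapseLetter_eq (hr : 2 ≤ r) (m : Fin r → ℕ) (a : Fin r) :
    ∑ b ∈ univ.filter (fun b => collapseLetter r b = a), m b =
      if (a : ℕ) = r - 2 then m a + m ⟨r - 1, Nat.sub_one_lt_of_lt hr⟩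
      else if (a : ℕ) = r - 1 then 0 else m a := by
  have hfiber (b : Fin r) : collapseLetter r b = a ↔
      b = a ∧ (a : ℕ) ≠ r - 1 ∨ (b : ℕ) = r - 1 ∧ (a : ℕ) = r - 2 := by
    unfold collapseLetter
    split_ifs <;> simp only [Fin.ext_iff] <;> omega
  split_ifs with h2 h1
  · rw [← sum_pair (show a ≠ ⟨r - 1, by omega⟩ by simp [Fin.ext_iff]; omega)]
    congr 1
    ext b
    simp only [mem_filter, mem_univ, true_and, hfiber, mem_insert, mem_singleton, Fin.ext_iff]
    omega
  · rw [sum_eq_zero]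
    intro b hb
    simp only [mem_filter, mem_univ, true_and, hfiber] at hb
    omega
  · rw [sum_eq_single_of_mem a (by simp [hfiber, h1])]
    intro b hb hba
    simp only [mem_filter, mem_univ, true_and, hfiber] at hb
    omega

end Collapse

/-- Lemma 1 of the paper: if `π` is a stationary distribution of the `m`-TASEP and
`π'(v) = ∑_{u : h(u) = v} π(u)` where `h` collapses the letter `r` into `r - 1`, then
`π'` is a stationary distribution of the `m'`-TASEP, where
`m' = (m_1, …, m_{r-2}, m_{r-1} + m_r)` (the now-unused top letter having multiplicity `0`). -/
theorem stmt_4 (r n : ℕ) [NeZero n] [NeZero r] (hr : 2 ≤ r) (m : Fin r → ℕ)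
    (π : (Fin n → Fin r) → ℚ)
    (hsupp : ∀ u, π u ≠ 0 → hasType m u)
    (hnonneg : ∀ u, 0 ≤ π u)
    (hsum : ∑ u : Fin n → Fin r, π u = 1)
    (hstat : ∀ v, ∑ u : Fin n → Fin r, π u * tasepMatrix u v = π v)
    (m' : Fin r → ℕ)
    (hm' : ∀ a : Fin r, m' a =
      if (a : ℕ) = r - 2 then m a + m ⟨r - 1, by omega⟩
      else if (a : ℕ) = r - 1 then 0 else m a)
    (π' : (Fin n → Fin r) → ℚ)
    (hπ' : ∀ v, π' v = ∑ u ∈ Finset.univ.filter (fun u => collapseTop u = v), π u) :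
    (∀ v, π' v ≠ 0 → hasType m' v) ∧
    (∀ v, 0 ≤ π' v) ∧
    (∑ v : Fin n → Fin r, π' v = 1) ∧
    (∀ v, ∑ u : Fin n → Fin r, π' u * tasepMatrix u v = π' v) := by
  simp only [collapseTop_eq_comp] at hπ'
  obtain rfl : π' = fun v => ∑ u ∈ univ.filter (fun u => collapseLetter r ∘ u = v), π u :=
    funext hπ'
  have hm'_eq : m' = fun a => ∑ b ∈ univ.filter (fun b => collapseLetter r b = a), m b :=
    funext fun a => (hm' a).trans (sum_filter_collapseLetter_eq hr m a).symm
  refine ⟨fun v hv => ?_, fun v => sum_nonneg fun u _ => hnonneg u,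
    (sum_fiberwise _ _ _).trans hsum,
    sum_fiber_mul_eq_of_lumpable _ _ _ collapseLetter_monotone.tasepMatrix_comp π hstat⟩
  obtain ⟨u, hu, hπu⟩ := exists_ne_zero_of_sum_ne_zero hv
  rw [(mem_filter.1 hu).2.symm, hm'_eq]
  exact hasType_comp (hsupp u hπu) _
end

section
/- Fix s ≥ 0, n > s, and a function F from words over {α, β} of length n - s to the nonnegative rationals. Suppose: (1) F(v) = F(f(v)) for every v, where f(v) changes all non-trailing β's of v into α's; and (2) for every b with 0 ≤ b ≤ n - s, Σ_{v ∈ E_b} F(v) = C(n, b) · F(e^{(0)}), where E_b is the set of words of length n - s with exactly b β's and e^{(b)} is the sorted word α^{n-s-b}β^b. Then for every b with 0 ≤ b ≤ n - s, F(e^{(b)}) = C(s + b, s) · F(e^{(0)}). -/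
/-- `f v` changes all non-trailing β's (`true`s) of `v` into α's (`false`s):
position `i` keeps a β exactly when all letters from `i` on are β. -/
def collapseNonTrailing {L : ℕ} (v : Fin L → Bool) : Fin L → Bool :=
  fun i => decide (∀ j : Fin L, i ≤ j → v j = true)

/-- The sorted word `e^{(b)} = α^{L-b} β^b` of length `L`. -/
def sortedBetaWord (L b : ℕ) : Fin L → Bool := fun i => decide (L - b ≤ (i : ℕ))

/-!
Hypothesis (1) makes `F v` depend only on the number `t` of trailing β's of `v`, since
`f v = e⁽ᵗ⁾`. Grouping the words of `E_b` by `t`, hypothesis (2) becomes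
`∑_{t ≤ b} C(L-1-t, b-t) F(e⁽ᵗ⁾) = C(n, b) F(e⁽⁰⁾)` for `b < L = n - s`, because a word
with `b` β's and exactly `t` trailing β's is an arbitrary word with `b - t` β's followed
by `αβᵗ`. This system is triangular with unit diagonal, so induction on `b` determines
`F(e⁽ᵇ⁾)`, and the values `C(s+t, s) F(e⁽⁰⁾)` solve it by the Chu–Vandermonde identity
`∑_t C(L-1-t, b-t) C(s+t, s) = C(s+L, b)`.
-/

open Finset

theorem Nat.sum_antidiagonal_add_choose_mul_add_choose (p q k : ℕ) :
    ∑ ij ∈ antidiagonal k, (p + ij.1).choose ij.1 * (q + ij.2).choose ij.2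
      = (p + q + 1 + k).choose k := by
  -- Chu–Vandermonde at the negative integers `-(p + 1)` and `-(q + 1)`, via upper negation.
  have hneg (a i : ℕ) : Ring.choose (-(a + 1 : ℤ)) i = (-1) ^ i * ((a + i).choose i : ℤ) := by
    rw [Ring.choose_neg, Units.smul_def, smul_eq_mul, ← Ring.choose_natCast,
      Int.coe_negOnePow_natCast]
    push_cast
    ring_nf
  have key := Ring.add_choose_eq k (Commute.all (-(p + 1 : ℤ)) (-(q + 1)))
  rw [← neg_add, show (p + 1 : ℤ) + (q + 1) = ((p + q + 1 : ℕ) : ℤ) + 1 by push_cast; ring,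
    hneg] at key
  have hsum : ∑ ij ∈ antidiagonal k,
        Ring.choose (-(p + 1 : ℤ)) ij.1 * Ring.choose (-(q + 1 : ℤ)) ij.2
      = (-1) ^ k * ∑ ij ∈ antidiagonal k,
        ((p + ij.1).choose ij.1 * (q + ij.2).choose ij.2 : ℤ) := by
    rw [mul_sum]
    refine sum_congr rfl fun ij hij => ?_
    rw [hneg, hneg, ← mem_antidiagonal.mp hij, pow_add]
    ring
  rw [hsum] at key
  exact_mod_cast (mul_left_cancel₀ (pow_ne_zero _ (by norm_num)) key).symm

namespace BetaWord

variable {L : ℕ}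

def betaCount (v : Fin L → Bool) : ℕ := #{i | v i = true}

def trailingBetaCount (v : Fin L → Bool) : ℕ := betaCount (collapseNonTrailing v)

lemma betaCount_le (v : Fin L → Bool) : betaCount v ≤ L :=
  (card_le_univ _).trans_eq (Fintype.card_fin L)

lemma betaCount_mono : Monotone (betaCount : (Fin L → Bool) → ℕ) := fun v w hvw =>
  card_le_card fun i hi => by
    simpa using Bool.le_iff_imp.1 (hvw i) (mem_filter.1 hi).2

lemma betaCount_sortedBetaWord {b : ℕ} (hb : b ≤ L) : betaCount (sortedBetaWord L b) = b := by
  have hsplit := card_filter_add_card_filter_not (s := (univ : Finset (Fin L)))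
    (fun i => (i : ℕ) < L - b)
  rw [card_univ, Fintype.card_fin, Fin.card_filter_val_lt] at hsplit
  simp only [betaCount, sortedBetaWord, decide_eq_true_eq, ← not_lt]
  omega

lemma sortedBetaWord_inj {a b : ℕ} (ha : a ≤ L) (hb : b ≤ L) :
    sortedBetaWord L a = sortedBetaWord L b ↔ a = b := by
  refine ⟨fun h => ?_, congrArg _⟩
  rw [← betaCount_sortedBetaWord ha, h, betaCount_sortedBetaWord hb]

lemma eq_sortedBetaWord_of_monotone {w : Fin L → Bool} (hw : Monotone w) :
    w = sortedBetaWord L (betaCount w) := by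
  funext i
  have := i.isLt
  cases hwi : w i
  · have : betaCount w ≤ #(Ioi i) := card_le_card fun j hj => by
      simp only [mem_filter, mem_univ, true_and] at hj
      exact mem_Ioi.2 <| lt_of_not_ge fun hji => by
        simpa [hwi, hj] using Bool.le_iff_imp.1 (hw hji)
    rw [Fin.card_Ioi] at this
    simp [sortedBetaWord]
    omega
  · have : #(Ici i) ≤ betaCount w := card_le_card fun j hj => by
      simpa using Bool.le_iff_imp.1 (hw (mem_Ici.1 hj)) hwi
    rw [Fin.card_Ici] at this
    simp [sortedBetaWord]
    omega

lemma monotone_collapseNonTrailing (v : Fin L → Bool) : Monotone (collapseNonTrailing v) :=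
  fun i i' hii' => Bool.le_iff_imp.2 fun h => by
    simp only [collapseNonTrailing, decide_eq_true_eq] at h ⊢
    exact fun j hj => h j (hii'.trans hj)

lemma collapseNonTrailing_le (v : Fin L → Bool) : collapseNonTrailing v ≤ v := fun i =>
  Bool.le_iff_imp.2 fun h => by
    simp only [collapseNonTrailing, decide_eq_true_eq] at h
    exact h i le_rfl

lemma collapseNonTrailing_eq_sortedBetaWord (v : Fin L → Bool) :
    collapseNonTrailing v = sortedBetaWord L (trailingBetaCount v) :=
  eq_sortedBetaWord_of_monotone (monotone_collapseNonTrailing v)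

lemma trailingBetaCount_le_betaCount (v : Fin L → Bool) : trailingBetaCount v ≤ betaCount v :=
  betaCount_mono (collapseNonTrailing_le v)

def prefixWord (m : Fin L) (S : Finset (Fin L)) : Fin L → Bool :=
  fun i => decide (i ∈ S ∨ m < i)

lemma collapseNonTrailing_prefixWord {m : Fin L} {S : Finset (Fin L)} (hm : m ∉ S) :
    collapseNonTrailing (prefixWord m S) = sortedBetaWord L (L - 1 - m) := by
  funext i
  simp only [collapseNonTrailing, prefixWord, sortedBetaWord, decide_eq_true_eq, decide_eq_decide]
  have := m.isLt
  rw [show L - (L - 1 - m) ≤ (i : ℕ) ↔ m < i by rw [Fin.lt_def]; omega]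
  refine ⟨fun h => ?_, fun h j hj => Or.inr (h.trans_le hj)⟩
  by_contra him
  simpa [hm] using h m (not_lt.1 him)

lemma betaCount_prefixWord {m : Fin L} {S : Finset (Fin L)} (hS : S ⊆ Iio m) :
    betaCount (prefixWord m S) = #S + (L - 1 - m) := by
  have hdisj : Disjoint S (Ioi m) := disjoint_left.2 fun i hi him =>
    lt_asymm (mem_Iio.1 (hS hi)) (mem_Ioi.1 him)
  rw [← Fin.card_Ioi, ← card_union_of_disjoint hdisj, betaCount]
  congr 1
  ext i
  simp only [mem_filter, mem_univ, true_and, mem_union, mem_Ioi, prefixWord, decide_eq_true_eq]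

lemma prefixWord_injOn (m : Fin L) : Set.InjOn (prefixWord m) {S | S ⊆ Iio m} := by
  intro S hS T hT hST
  ext i
  have := congrFun hST i
  simp only [prefixWord, decide_eq_decide] at this
  constructor
  · intro hi
    exact (this.1 (Or.inl hi)).resolve_right (lt_asymm (mem_Iio.1 (hS hi)))
  · intro hi
    exact (this.2 (Or.inl hi)).resolve_right (lt_asymm (mem_Iio.1 (hT hi)))

lemma eq_prefixWord_of_collapseNonTrailing_eq {v : Fin L → Bool} {m : Fin L}
    (hv : collapseNonTrailing v = sortedBetaWord L (L - 1 - m)) :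
    v = prefixWord m {i | v i = true ∧ i < m} := by
  have hafter (i : Fin L) : (∀ j, i ≤ j → v j = true) ↔ m < i := by
    have hvi := congrFun hv i
    have := m.isLt
    simp only [collapseNonTrailing, sortedBetaWord, decide_eq_decide] at hvi
    rw [hvi, Fin.lt_def]
    omega
  funext i
  rcases lt_trichotomy i m with him | rfl | hmi
  · simp [prefixWord, him, not_lt_of_gt him]
  · have hvm : v i = false := by
      by_contra h
      refine lt_irrefl i ((hafter i).1 fun j hj => ?_)
      rcases hj.lt_or_eq with hij | rfl
      · exact (hafter j).2 hij j le_rfl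
      · simpa using h
    simp [prefixWord, hvm]
  · simp [prefixWord, hmi, (hafter i).2 hmi i le_rfl]

lemma card_filter_betaCount_collapseNonTrailing_eq {b t : ℕ} (htb : t ≤ b) (hb : b < L) :
    #{v : Fin L → Bool | betaCount v = b ∧ collapseNonTrailing v = sortedBetaWord L t}
      = (L - 1 - t).choose (b - t) := by
  set m : Fin L := ⟨L - 1 - t, by omega⟩
  have ht : L - 1 - m = t := by simp [m]; omega
  rw [show (L - 1 - t).choose (b - t) = #(powersetCard (b - t) (Iio m)) by
    rw [card_powersetCard, Fin.card_Iio]]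
  symm
  refine card_nbij (prefixWord m) (fun S hS => ?_) (fun S hS T hT => prefixWord_injOn m
    (mem_powersetCard.1 hS).1 (mem_powersetCard.1 hT).1) (fun v hv => ?_)
  · obtain ⟨hSm, hcard⟩ := mem_powersetCard.1 hS
    simp only [coe_filter, mem_univ, true_and, Set.mem_ofPred]
    refine ⟨?_, ht ▸ collapseNonTrailing_prefixWord fun hm =>
       lt_irrefl m (mem_Iio.1 (hSm hm))⟩
    rw [betaCount_prefixWord hSm, hcard]
    omega
  · simp only [coe_filter, mem_univ, true_and, Set.mem_ofPred] at hv
    have hv' := eq_prefixWord_of_collapseNonTrailing_eq (ht ▸ hv.2)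
    have hSm : ({i | v i = true ∧ i < m} : Finset (Fin L)) ⊆ Iio m := fun i hi =>
      mem_Iio.2 (mem_filter.1 hi).2.2
    refine ⟨_, mem_powersetCard.2 ⟨hSm, ?_⟩, hv'.symm⟩
    have hcount := hv.1
    rw [hv', betaCount_prefixWord hSm] at hcount
    omega

lemma sum_filter_betaCount_eq {M : Type*} [AddCommMonoid M] (g : ℕ → M) {b : ℕ} (hb : b < L) :
    ∑ v : Fin L → Bool with betaCount v = b, g (trailingBetaCount v)
      = ∑ t ∈ range (b + 1), (L - 1 - t).choose (b - t) • g t := by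
  rw [← sum_fiberwise_of_maps_to (g := trailingBetaCount) (t := range (b + 1))
    fun v hv => mem_range_succ_iff.2 ((mem_filter.1 hv).2 ▸ trailingBetaCount_le_betaCount v)]
  refine sum_congr rfl fun t ht => ?_
  have htb := mem_range_succ_iff.1 ht
  rw [sum_congr rfl fun v hv => congrArg g (mem_filter.1 hv).2, sum_const, filter_filter,
    ← card_filter_betaCount_collapseNonTrailing_eq htb hb]
  congr 2
  ext v
  simp only [mem_filter, mem_univ, true_and]
  rw [collapseNonTrailing_eq_sortedBetaWord,
    sortedBetaWord_inj (a := trailingBetaCount v) (betaCount_le _) (by omega)]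

lemma filter_betaCount_eq_length :
    ({v | betaCount v = L} : Finset (Fin L → Bool)) = {sortedBetaWord L L} := by
  ext v
  simp only [mem_filter, mem_univ, true_and, mem_singleton]
  refine ⟨fun hv => ?_, fun hv => hv ▸ betaCount_sortedBetaWord le_rfl⟩
  have hall := eq_univ_of_card _ (hv.trans (Fintype.card_fin L).symm)
  funext i
  simpa [sortedBetaWord] using eq_univ_iff_forall.1 hall i

end BetaWord

open BetaWord

lemma Nat.sum_range_sub_choose_mul_add_choose (s L b : ℕ) (hb : b < L) :
    ∑ t ∈ range (b + 1), (L - 1 - t).choose (b - t) * (s + t).choose s = (s + L).choose b := by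
  rw [show s + L = s + (L - 1 - b) + 1 + b by omega,
    ← Nat.sum_antidiagonal_add_choose_mul_add_choose, Nat.sum_antidiagonal_eq_sum_range_succ_mk]
  refine sum_congr rfl fun t ht => ?_
  have := mem_range_succ_iff.1 ht
  rw [mul_comm, Nat.choose_symm_add, show L - 1 - b + (b - t) = L - 1 - t by omega]

theorem stmt_10_general (s n : ℕ) (hsn : s < n) (F : (Fin (n - s) → Bool) → ℚ)
    (h1 : ∀ v, F v = F (collapseNonTrailing v))
    (h2 : ∀ b ≤ n - s,
      ∑ v ∈ Finset.univ.filter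
          (fun v : Fin (n - s) → Bool => (Finset.univ.filter (fun i => v i = true)).card = b),
        F v = (n.choose b : ℚ) * F (sortedBetaWord (n - s) 0)) :
    ∀ b ≤ n - s,
      F (sortedBetaWord (n - s) b) = ((s + b).choose s : ℚ) * F (sortedBetaWord (n - s) 0) := by
  have hF (v : Fin (n - s) → Bool) :
      F v = F (sortedBetaWord (n - s) (trailingBetaCount v)) := by
    rw [h1 v, collapseNonTrailing_eq_sortedBetaWord]
  intro b
  induction b using Nat.strong_induction_on with | _ b ih => ?_
  intro hb
  have hsum : ∑ v : Fin (n - s) → Bool with betaCount v = b, F v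
      = n.choose b * F (sortedBetaWord (n - s) 0) := h2 b hb
  rcases hb.lt_or_eq with hb | rfl
  · rw [sum_congr rfl fun v _ => hF v,
      sum_filter_betaCount_eq (fun t => F (sortedBetaWord (n - s) t)) hb, sum_range_succ,
      Nat.sub_self, Nat.choose_zero_right, one_smul,
      sum_congr rfl fun t ht => by
        rw [ih t (mem_range.1 ht) ((mem_range.1 ht).le.trans hb.le), nsmul_eq_mul, ← mul_assoc],
      ← sum_mul] at hsum
    have hid := Nat.sum_range_sub_choose_mul_add_choose s (n - s) b hb
    rw [Nat.add_sub_cancel' hsn.le, sum_range_succ, Nat.sub_self, Nat.choose_zero_right,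
      one_mul] at hid
    have hidℚ : (∑ t ∈ range b, ((n - s - 1 - t).choose (b - t) * (s + t).choose s : ℚ))
        + (s + b).choose s = n.choose b := by
      exact_mod_cast hid
    linear_combination hsum - F (sortedBetaWord (n - s) 0) * hidℚ
  · rw [filter_betaCount_eq_length, sum_singleton] at hsum
    rw [hsum, Nat.add_sub_cancel' hsn.le, Nat.choose_symm hsn.le]

/-- Abstract form of Lemma 5 of the paper. Fix `s ≥ 0`, `n > s`, `L = n - s`, and
`F : words of length L over {α,β} → ℚ≥0`. If (1) `F v = F (f v)` for all `v`, and
(2) for every `b ≤ L`, `∑_{v ∈ E_b} F v = C(n, b) · F(e⁽⁰⁾)`,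
then `F(e⁽ᵇ⁾) = C(s + b, s) · F(e⁽⁰⁾)` for every `b ≤ L`. -/
theorem stmt_10 (s n : ℕ) (hsn : s < n) (F : (Fin (n - s) → Bool) → ℚ)
    (hF0 : ∀ v, 0 ≤ F v)
    (h1 : ∀ v, F v = F (collapseNonTrailing v))
    (h2 : ∀ b ≤ n - s,
      ∑ v ∈ Finset.univ.filter
          (fun v : Fin (n - s) → Bool => (Finset.univ.filter (fun i => v i = true)).card = b),
        F v = (n.choose b : ℚ) * F (sortedBetaWord (n - s) 0)) :
    ∀ b ≤ n - s,
      F (sortedBetaWord (n - s) b) = ((s + b).choose s : ℚ) * F (sortedBetaWord (n - s) 0) :=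
  stmt_10_general s n hsn F h1 h2
end

section
/- For all integers s ≥ 0, b ≥ 0 and n with s + b ≤ n: C(n, b) − Σ_{k=0}^{b-1} C(n - s - k - 1, b - k) · C(s + k, s) = C(s + b, b). -/
lemma aux_stmt_11 (s : ℕ) : ∀ n b : ℕ, s + b ≤ n →
    (∑ k ∈ Finset.range b, (n - s - k - 1).choose (b - k) * (s + k).choose s)
      + (s + b).choose b = n.choose b := by
  intro n
  induction n with
  | zero =>
    intro b hb
    have hb0 : b = 0 := by omega
    subst hb0
    simp
  | succ n ih =>
    intro b hb
    match b with
    | 0 => simp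
    | b + 1 =>
      by_cases hcase : s + (b + 1) ≤ n
      · have h1 : ∀ k ∈ Finset.range (b + 1),
            (n + 1 - s - k - 1).choose (b + 1 - k) * (s + k).choose s
              = (n - s - k - 1).choose (b - k) * (s + k).choose s
                + (n - s - k - 1).choose (b + 1 - k) * (s + k).choose s := by
          intro k hk
          simp only [Finset.mem_range] at hk
          have e1 : n + 1 - s - k - 1 = (n - s - k - 1) + 1 := by omega
          have e2 : b + 1 - k = (b - k) + 1 := by omega
          rw [e1, e2, Nat.choose_succ_succ, add_mul]
        rw [Finset.sum_congr rfl h1, Finset.sum_add_distrib]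
        have hA : ∑ k ∈ Finset.range (b + 1),
            (n - s - k - 1).choose (b - k) * (s + k).choose s
            = (∑ k ∈ Finset.range b,
                (n - s - k - 1).choose (b - k) * (s + k).choose s)
              + (s + b).choose s := by
          rw [Finset.sum_range_succ]
          congr 1
          have : b - b = 0 := by omega
          rw [this, Nat.choose_zero_right, one_mul]
        have hIH1 := ih b (by omega)
        have hIH2 := ih (b + 1) (by omega)
        have hsymm : (s + b).choose s = (s + b).choose b := Nat.choose_symm_add
        have hpascal : (n + 1).choose (b + 1) = n.choose b + n.choose (b + 1) :=
          Nat.choose_succ_succ n b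
        omega
      · have hn : n + 1 = s + (b + 1) := by omega
        have h0 : ∀ k ∈ Finset.range (b + 1),
            (n + 1 - s - k - 1).choose (b + 1 - k) * (s + k).choose s = 0 := by
          intro k hk
          simp only [Finset.mem_range] at hk
          have : n + 1 - s - k - 1 < b + 1 - k := by omega
          rw [Nat.choose_eq_zero_of_lt this, zero_mul]
        rw [Finset.sum_congr rfl h0, Finset.sum_const_zero, zero_add, hn]

/-- Key arithmetic step in Lemma 5 of the paper: for `s + b ≤ n`,
`C(n, b) − ∑_{k=0}^{b-1} C(n - s - k - 1, b - k) * C(s + k, s) = C(s + b, b)`. -/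
theorem stmt_11 (n b s : ℕ) (h : s + b ≤ n) :
    (n.choose b : ℤ) - ∑ k ∈ Finset.range b,
      ((n - s - k - 1).choose (b - k) * (s + k).choose s : ℕ) =
    (s + b).choose b := by
  have := aux_stmt_11 s n b h
  have hz : ((∑ k ∈ Finset.range b, (n - s - k - 1).choose (b - k) * (s + k).choose s : ℕ) : ℤ)
      + ((s + b).choose b : ℤ) = (n.choose b : ℤ) := by exact_mod_cast congrArg (Nat.cast : ℕ → ℤ) this
  push_cast at hz ⊢
  linarith
end

section
/- The m-TASEP Markov chain on words of type m is irreducible when restricted appropriately: from any word of type m, the sorted word 1^{m_1}...r^{m_r} (read cyclically) is reachable by a sequence of TASEP moves, where a TASEP move swaps a letter with the strictly larger letter immediately to its left (cyclically). -/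
/-- A single TASEP move: some letter strictly smaller than the letter immediately to
its left (cyclically) swaps places with it. -/
def tasepMove {n r : ℕ} [NeZero n] (u v : Fin n → Fin r) : Prop :=
  ∃ i : Fin n, u i < u (i - 1) ∧
    v = Function.update (Function.update u i (u (i - 1))) (i - 1) (u i)

lemma subone {n : ℕ} [NeZero n] (i : Fin n) (h : i ≠ 0) : (i - 1).val = i.val - 1 := by
  rcases n with _ | k
  · exact absurd rfl (NeZero.ne 0)
  · rw [Fin.coe_sub_one, if_neg h]

/-- A non-monotone word has a descent at a non-wrap position. -/
lemma descent {n r : ℕ} [NeZero n] {u : Fin n → Fin r} (h : ¬ Monotone u) :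
    ∃ i : Fin n, i ≠ 0 ∧ u i < u (i - 1) := by
  by_contra hc
  push_neg at hc
  apply h
  have key : ∀ d : ℕ, ∀ j k : Fin n, j.val + d = k.val → u j ≤ u k := by
    intro d
    induction d with
    | zero => intro j k hjk; have : j = k := Fin.ext (by omega); rw [this]
    | succ d ih =>
      intro j k hjk
      have hk0 : k ≠ 0 := by
        intro h0; rw [h0] at hjk; simp [Fin.val_zero] at hjk
      have hv : (k - 1).val = k.val - 1 := subone k hk0
      calc u j ≤ u (k - 1) := ih j (k - 1) (by omega)
        _ ≤ u k := hc k hk0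
  intro j k hjk
  exact key (k.val - j.val) j k (by omega)

/-- A TASEP move is composition with a transposition. -/
lemma move_eq_comp {n r : ℕ} [NeZero n] (u : Fin n → Fin r) (i : Fin n) :
    Function.update (Function.update u i (u (i - 1))) (i - 1) (u i)
      = u ∘ Equiv.swap i (i - 1) := by
  funext j
  by_cases h1 : j = i - 1
  · subst h1; simp [Equiv.swap_apply_right]
  · by_cases h2 : j = i
    · subst h2
      rw [Function.update_of_ne (by simpa [eq_comm] using h1), Function.update_self]
      simp [Equiv.swap_apply_left]
    · rw [Function.update_of_ne h1, Function.update_of_ne h2]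
      simp [Equiv.swap_apply_of_ne_of_ne h2 h1]

lemma hasType_comp_s14 {n r : ℕ} (m : Fin r → ℕ) (u : Fin n → Fin r) (σ : Equiv.Perm (Fin n))
    (hu : hasType m u) : hasType m (u ∘ σ) := by
  intro a
  rw [← hu a]
  apply Finset.card_bij' (fun j _ => σ j) (fun j _ => σ.symm j) <;> simp_all

/-- The potential function: weighted sum of letters. -/
def pot {n r : ℕ} (u : Fin n → Fin r) : ℕ := ∑ j, j.val * (u j).val

lemma pot_lt {n r : ℕ} [NeZero n] (u : Fin n → Fin r) (i : Fin n) (hi : i ≠ 0)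
    (hlt : u i < u (i - 1)) :
    pot u < pot (u ∘ Equiv.swap i (i - 1)) := by
  have hvi : (i - 1).val = i.val - 1 := subone i hi
  have hipos : 0 < i.val := by
    rcases Nat.eq_zero_or_pos i.val with h0 | h0
    · exact absurd (Fin.ext h0) hi
    · exact h0
  have hne : (i - 1) ≠ i := by
    intro h; have := congrArg Fin.val h; omega
  have hmem : (i - 1) ∈ Finset.univ.erase i := Finset.mem_erase.mpr ⟨hne, Finset.mem_univ _⟩
  have split : ∀ g : Fin n → Fin r,
      pot g = i.val * (g i).val + ((i-1).val * (g (i-1)).val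
        + ∑ j ∈ (Finset.univ.erase i).erase (i-1), j.val * (g j).val) := by
    intro g
    rw [pot, ← Finset.add_sum_erase _ _ (Finset.mem_univ i),
      ← Finset.add_sum_erase _ _ hmem]
  rw [split u, split (u ∘ Equiv.swap i (i - 1))]
  have e1 : (u ∘ Equiv.swap i (i-1)) i = u (i - 1) := by simp [Equiv.swap_apply_left]
  have e2 : (u ∘ Equiv.swap i (i-1)) (i-1) = u i := by simp [Equiv.swap_apply_right]
  have e3 : ∑ j ∈ (Finset.univ.erase i).erase (i-1), j.val * ((u ∘ Equiv.swap i (i-1)) j).val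
      = ∑ j ∈ (Finset.univ.erase i).erase (i-1), j.val * (u j).val := by
    apply Finset.sum_congr rfl
    intro j hj
    simp only [Finset.mem_erase] at hj
    simp [Equiv.swap_apply_of_ne_of_ne hj.2.1 hj.1]
  rw [e1, e2, e3]
  have hab : (u i).val < (u (i-1)).val := hlt
  set x := i.val
  set y := (i-1).val
  set a := (u (i-1)).val
  set b := (u i).val
  have hyx : y < x := by omega
  have : x * b + y * a < x * a + y * b := by nlinarith
  omega

lemma pot_le {n r : ℕ} (u : Fin n → Fin r) : pot u ≤ n * (n * r) := by
  have : ∀ j : Fin n, j.val * (u j).val ≤ n * r := fun j =>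
    Nat.mul_le_mul (le_of_lt j.isLt) (le_of_lt (u j).isLt)
  calc pot u ≤ ∑ _j : Fin n, n * r := Finset.sum_le_sum fun j _ => this j
    _ = n * (n * r) := by simp [Finset.sum_const, mul_comm]

lemma mono_count {n r : ℕ} (u : Fin n → Fin r) (hu : Monotone u) (a : Fin r) (i : Fin n) :
    u i ≤ a ↔ i.val < (Finset.univ.filter fun j => u j ≤ a).card := by
  constructor
  · intro h
    have hsub : Finset.Iic i ⊆ Finset.univ.filter fun j => u j ≤ a := by
      intro j hj
      simp only [Finset.mem_Iic] at hj
      simp only [Finset.mem_filter, Finset.mem_univ, true_and]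
      exact le_trans (hu hj) h
    have := Finset.card_le_card hsub
    rw [Fin.card_Iic] at this
    omega
  · intro h
    by_contra hna
    have hsub : (Finset.univ.filter fun j => u j ≤ a) ⊆ Finset.Iio i := by
      intro j hj
      simp only [Finset.mem_filter, Finset.mem_univ, true_and] at hj
      simp only [Finset.mem_Iio]
      by_contra hji
      exact hna (le_trans (hu (le_of_not_gt hji)) hj)
    have := Finset.card_le_card hsub
    rw [Fin.card_Iio] at this
    omega

lemma count_le {n r : ℕ} (m : Fin r → ℕ) (u : Fin n → Fin r) (hu : hasType m u) (a : Fin r) :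
    (Finset.univ.filter fun j => u j ≤ a).card = ∑ b ∈ Finset.Iic a, m b := by
  have : (Finset.univ.filter fun j => u j ≤ a)
      = (Finset.Iic a).biUnion (fun b => Finset.univ.filter fun j => u j = b) := by
    ext j
    simp [Finset.mem_biUnion]
  rw [this, Finset.card_biUnion]
  · exact Finset.sum_congr rfl fun b _ => hu b
  · intro x hx y hy hxy
    simp only [Finset.disjoint_left, Finset.mem_filter]
    rintro j ⟨_, rfl⟩ ⟨_, h2⟩
    exact hxy h2

/-- Two monotone words of the same type are equal. -/
lemma mono_unique {n r : ℕ} (m : Fin r → ℕ) (u w : Fin n → Fin r)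
    (hu : Monotone u) (hw : Monotone w) (hut : hasType m u) (hwt : hasType m w) : u = w := by
  funext i
  have key : ∀ a, u i ≤ a ↔ w i ≤ a := by
    intro a
    rw [mono_count u hu a i, mono_count w hw a i, count_le m u hut, count_le m w hwt]
  exact le_antisymm ((key (w i)).mpr le_rfl) ((key (u i)).mp le_rfl)

/-- From any word we can reach a monotone word of the same type. -/
lemma reach_mono {n r : ℕ} [NeZero n] (m : Fin r → ℕ) :
    ∀ k : ℕ, ∀ u : Fin n → Fin r, n * (n * r) - pot u ≤ k → hasType m u →
      ∃ v, Relation.ReflTransGen tasepMove u v ∧ Monotone v ∧ hasType m v := by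
  intro k
  induction k with
  | zero =>
    intro u hk hu
    by_cases hmo : Monotone u
    · exact ⟨u, Relation.ReflTransGen.refl, hmo, hu⟩
    · exfalso
      obtain ⟨i, hi, hlt⟩ := descent hmo
      have h1 := pot_lt u i hi hlt
      have h2 := pot_le (u ∘ Equiv.swap i (i - 1))
      have h3 := pot_le u
      omega
  | succ k ih =>
    intro u hk hu
    by_cases hmo : Monotone u
    · exact ⟨u, Relation.ReflTransGen.refl, hmo, hu⟩
    · obtain ⟨i, hi, hlt⟩ := descent hmo
      have h1 := pot_lt u i hi hlt
      have h2 := pot_le (u ∘ Equiv.swap i (i - 1))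
      obtain ⟨v, hv, hvm, hvt⟩ := ih (u ∘ Equiv.swap i (i - 1)) (by omega)
        (hasType_comp_s14 m u _ hu)
      exact ⟨v, Relation.ReflTransGen.head ⟨i, hlt, (move_eq_comp u i).symm⟩ hv, hvm, hvt⟩

/-- Irreducibility (towards the sorted word): from any word `u` of type `m`, some
cyclic rotation of the sorted word `1^{m_1} ⋯ r^{m_r}` (the monotone word `w` of
type `m`, read cyclically) is reachable by a sequence of TASEP moves. -/
theorem stmt_14 (r n : ℕ) [NeZero n] (m : Fin r → ℕ) (hm : ∀ i, 0 < m i)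
    (hn : n = ∑ i, m i)
    (u w : Fin n → Fin r) (hu : hasType m u) (hw : Monotone w) (hwt : hasType m w) :
    ∃ v : Fin n → Fin r, Relation.ReflTransGen tasepMove u v ∧
      ∃ c : Fin n, v = fun i => w (i + c) := by
  obtain ⟨v, hreach, hvm, hvt⟩ := reach_mono m (n * (n * r)) u (by omega) hu
  refine ⟨v, hreach, 0, ?_⟩
  rw [mono_unique m v w hvm hw hvt hwt]
  funext i
  simp
end
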